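/- arXiv:1302.6543 — 3 statements merged into one kernel-verified Lean document; each statement's English description precedes it below -/
import Mathlib

section
/- For t ∈ ℝ let f_t(x,y) = t²x⁴ + (t²+1)x²y² + y⁴. With S, T the standard SL₂-invariants of binary quartics, the function h(t) = S(f_t)³ / T(f_t)² equals (3t⁴+7t²+3)³ / ((t²+1)²(t²+t+1)²(t²−t+1)²), and h is injective on each of the intervals (−∞,−1], [−1,0], [0,1], [1,∞). -/
/-- The invariant `S(p) = a₀a₄ − 4a₁a₃ + 3a₂²`. -/
def Sinv (a : Fin 5 → ℝ) : ℝ := a 0 * a 4 - 4 * a 1 * a 3 + 3 * (a 2) ^ 2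

/-- The invariant `T(p) = a₀a₂a₄ − a₀a₃² + 2a₁a₂a₃ − a₁²a₄ − a₂³`. -/
def Tinv (a : Fin 5 → ℝ) : ℝ :=
  a 0 * a 2 * a 4 - a 0 * (a 3) ^ 2 + 2 * a 1 * a 2 * a 3
    - (a 1) ^ 2 * a 4 - (a 2) ^ 3

/-- Coefficients of the binary quartic `f_t = t²x⁴ + (t²+1)x²y² + y⁴`. -/
def fCoeff (t : ℝ) : Fin 5 → ℝ := ![t ^ 2, 0, t ^ 2 + 1, 0, 1]

/-- `h(t) = S(f_t)³ / T(f_t)²`. -/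
noncomputable def hFun (t : ℝ) : ℝ := (Sinv (fCoeff t)) ^ 3 / (Tinv (fCoeff t)) ^ 2

/-- The numerator polynomial. -/
def Npoly (t : ℝ) : ℝ := (3 * t ^ 4 + 7 * t ^ 2 + 3) ^ 3

/-- The denominator polynomial. -/
def Dpoly (t : ℝ) : ℝ := (t ^ 2 + 1) ^ 2 * (t ^ 2 + t + 1) ^ 2 * (t ^ 2 - t + 1) ^ 2

/-- The positive cofactor in the key factorization. -/
def Rpoly (a b : ℝ) : ℝ :=
  833 * a ^ 4 * b ^ 4 + 994 * a ^ 2 * (a ^ 4 + 1) * b ^ 4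
    + 994 * a ^ 4 * b ^ 2 * (b ^ 4 + 1) + 289 * (a ^ 4 + 1) ^ 2 * b ^ 4
    + 289 * a ^ 4 * (b ^ 4 + 1) ^ 2 + 1108 * a ^ 2 * (a ^ 4 + 1) * b ^ 2 * (b ^ 4 + 1)
    + 306 * a ^ 2 * (a ^ 4 + 1) * (b ^ 4 + 1) ^ 2
    + 306 * (a ^ 4 + 1) ^ 2 * b ^ 2 * (b ^ 4 + 1)
    + 81 * (a ^ 4 + 1) ^ 2 * (b ^ 4 + 1) ^ 2

lemma Rpoly_pos (a b : ℝ) : 0 < Rpoly a b := by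
  unfold Rpoly; positivity

lemma cross_eq (a b : ℝ) :
    Npoly a * Dpoly b - Npoly b * Dpoly a
      = (a ^ 2 * b ^ 2 - 1) * (b ^ 2 - a ^ 2) * Rpoly a b := by
  unfold Npoly Dpoly Rpoly; ring

lemma Dpoly_pos (t : ℝ) : 0 < Dpoly t := by
  have h1 : (0:ℝ) < t ^ 2 + 1 := by positivity
  have h2 : (0:ℝ) < t ^ 2 + t + 1 := by nlinarith [sq_nonneg (2 * t + 1)]
  have h3 : (0:ℝ) < t ^ 2 - t + 1 := by nlinarith [sq_nonneg (2 * t - 1)]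
  exact mul_pos (mul_pos (pow_pos h1 2) (pow_pos h2 2)) (pow_pos h3 2)

lemma hFun_eq (t : ℝ) : hFun t = Npoly t / Dpoly t := by
  show (Sinv (fCoeff t)) ^ 3 / (Tinv (fCoeff t)) ^ 2 = _
  have hS : Sinv (fCoeff t) = 3 * t ^ 4 + 7 * t ^ 2 + 3 := by
    simp [Sinv, fCoeff]; ring
  have hT : (Tinv (fCoeff t)) ^ 2 = Dpoly t := by
    simp [Tinv, fCoeff, Dpoly]; ring
  rw [hS, hT, Npoly]

lemma hFun_neg (t : ℝ) : hFun (-t) = hFun t := by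
  rw [hFun_eq, hFun_eq]
  congr 1
  · unfold Npoly; ring
  · unfold Dpoly; ring

lemma anti_Ici : StrictAntiOn hFun (Set.Ici 1) := by
  intro a ha b hb hab
  simp only [Set.mem_Ici] at ha hb
  rw [hFun_eq, hFun_eq, div_lt_div_iff₀ (Dpoly_pos b) (Dpoly_pos a)]
  have hab1 : 1 < a * b := by nlinarith
  have h1 : 0 < a ^ 2 * b ^ 2 - 1 := by nlinarith
  have h2 : 0 < b ^ 2 - a ^ 2 := by nlinarith
  nlinarith [cross_eq a b, mul_pos (mul_pos h1 h2) (Rpoly_pos a b)]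

lemma mono_Icc : StrictMonoOn hFun (Set.Icc 0 1) := by
  intro a ha b hb hab
  simp only [Set.mem_Icc] at ha hb
  rw [hFun_eq, hFun_eq, div_lt_div_iff₀ (Dpoly_pos a) (Dpoly_pos b)]
  obtain ⟨ha0, ha1⟩ := ha; obtain ⟨hb0, hb1⟩ := hb
  have hab1 : a * b < 1 := by nlinarith
  have h1 : a ^ 2 * b ^ 2 - 1 < 0 := by nlinarith [mul_nonneg ha0 hb0]
  have h2 : 0 < b ^ 2 - a ^ 2 := by nlinarith
  nlinarith [cross_eq a b, mul_pos (mul_pos (neg_pos.mpr h1) h2) (Rpoly_pos a b)]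

/-- the rational invariant `h(t) = S(f_t)³/T(f_t)²` of the quartic
`f_t = t²x⁴ + (t²+1)x²y² + y⁴` equals
`(3t⁴+7t²+3)³ / ((t²+1)²(t²+t+1)²(t²−t+1)²)` and is injective on each of the
intervals `(−∞,−1]`, `[−1,0]`, `[0,1]`, `[1,∞)`. -/
theorem stmt5 :
    (∀ t : ℝ, hFun t =
      (3 * t ^ 4 + 7 * t ^ 2 + 3) ^ 3 /
        ((t ^ 2 + 1) ^ 2 * (t ^ 2 + t + 1) ^ 2 * (t ^ 2 - t + 1) ^ 2)) ∧
    Set.InjOn hFun (Set.Iic (-1)) ∧ Set.InjOn hFun (Set.Icc (-1) 0) ∧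
    Set.InjOn hFun (Set.Icc 0 1) ∧ Set.InjOn hFun (Set.Ici 1) := by
  refine ⟨fun t => hFun_eq t, ?_, ?_, mono_Icc.injOn, anti_Ici.injOn⟩
  · intro a ha b hb h
    simp only [Set.mem_Iic] at ha hb
    have h' : hFun (-a) = hFun (-b) := by rw [hFun_neg, hFun_neg, h]
    have := anti_Ici.injOn (by simp only [Set.mem_Ici]; linarith)
      (by simp only [Set.mem_Ici]; linarith) h'
    linarith
  · intro a ha b hb h
    simp only [Set.mem_Icc] at ha hb
    have h' : hFun (-a) = hFun (-b) := by rw [hFun_neg, hFun_neg, h]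
    have := mono_Icc.injOn (Set.mem_Icc.mpr ⟨by linarith, by linarith⟩)
      (Set.mem_Icc.mpr ⟨by linarith, by linarith⟩) h'
    linarith
end

section
/- For t,s ∈ [1,∞) with t ≠ s, the binary quartics f_t(x,y) = (x²+y²)(t²x²+y²) and f_s(x,y) = (x²+y²)(s²x²+y²) are not projectively equivalent: there is no c ∈ ℝ* and g ∈ GL₂(ℝ) with f_t = c·(g·f_s). -/
/-- The binary quartic `f_t(x,y) = (x²+y²)(t²x²+y²)`. -/
def fq (t x y : ℝ) : ℝ := (x ^ 2 + y ^ 2) * (t ^ 2 * x ^ 2 + y ^ 2)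

set_option maxHeartbeats 1600000 in
private lemma reg1 (u v : ℝ) (hu : 1 ≤ u) (huv : u < v)
    (hQu : u^2 - 34*u + 1 < 0) (hQv : v^2 - 34*v + 1 < 0) :
    ((1+v)*(v^2-34*v+1))^2*(u^2+14*u+1)^3 < ((1+u)*(u^2-34*u+1))^2*(v^2+14*v+1)^3 := by
  have hvu : (0:ℝ) ≤ v - u := by linarith
  have hx : (0:ℝ) ≤ u - 1 := by linarith
  have hy : (0:ℝ) ≤ v - 1 := by linarith
  have ha : (0:ℝ) ≤ 34*u-u^2-1 := by linarith
  have hb : (0:ℝ) ≤ 34*v-v^2-1 := by linarith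
  have hstrict : (0:ℝ) < (v-u) * (34*u-u^2-1) * (v-1)^3 :=
    mul_pos (mul_pos (by linarith) (by linarith)) (pow_pos (by linarith) 3)
  linarith [hstrict, (mul_nonneg (mul_nonneg hvu ha) (pow_nonneg hy 3)),
    (mul_nonneg (mul_nonneg hvu ha) (pow_nonneg hy 4)),
    (mul_nonneg (mul_nonneg (mul_nonneg hvu ha) (pow_nonneg hx 1)) (pow_nonneg hy 2)),
    (mul_nonneg (mul_nonneg (mul_nonneg hvu ha) (pow_nonneg hx 1)) (pow_nonneg hy 3)),
    (mul_nonneg (mul_nonneg (mul_nonneg hvu ha) (pow_nonneg hx 1)) (pow_nonneg hy 5)),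
    (mul_nonneg (mul_nonneg (mul_nonneg hvu ha) (pow_nonneg hx 2)) (pow_nonneg hy 3)),
    (mul_nonneg (mul_nonneg (mul_nonneg hvu ha) (pow_nonneg hx 2)) (pow_nonneg hy 4)),
    (mul_nonneg (mul_nonneg (mul_nonneg hvu ha) (pow_nonneg hx 3)) (pow_nonneg hy 4)),
    (mul_nonneg (mul_nonneg (mul_nonneg hvu ha) (pow_nonneg hx 3)) (pow_nonneg hy 5)),
    (mul_nonneg (mul_nonneg (mul_nonneg hvu hb) (pow_nonneg hx 1)) (pow_nonneg hy 3)),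
    (mul_nonneg (mul_nonneg (mul_nonneg hvu hb) (pow_nonneg hx 2)) (pow_nonneg hy 1)),
    (mul_nonneg (mul_nonneg (mul_nonneg hvu hb) (pow_nonneg hx 2)) (pow_nonneg hy 2)),
    (mul_nonneg (mul_nonneg (mul_nonneg hvu hb) (pow_nonneg hx 2)) (pow_nonneg hy 3)),
    (mul_nonneg (mul_nonneg hvu hb) (pow_nonneg hx 3)),
    (mul_nonneg (mul_nonneg (mul_nonneg hvu hb) (pow_nonneg hx 3)) (pow_nonneg hy 1)),
    (mul_nonneg (mul_nonneg (mul_nonneg hvu hb) (pow_nonneg hx 3)) (pow_nonneg hy 2)),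
    (mul_nonneg (mul_nonneg (mul_nonneg hvu hb) (pow_nonneg hx 3)) (pow_nonneg hy 3)),
    (mul_nonneg (mul_nonneg hvu hb) (pow_nonneg hx 4)),
    (mul_nonneg (mul_nonneg (mul_nonneg hvu hb) (pow_nonneg hx 4)) (pow_nonneg hy 1)),
    (mul_nonneg (mul_nonneg (mul_nonneg hvu hb) (pow_nonneg hx 4)) (pow_nonneg hy 2)),
    (mul_nonneg (mul_nonneg (mul_nonneg hvu hb) (pow_nonneg hx 4)) (pow_nonneg hy 3))]

set_option maxHeartbeats 1600000 in
private lemma reg2 (u v : ℝ) (hu : 1 ≤ u) (huv : u < v)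
    (hQu : 0 < u^2 - 34*u + 1) (hQv : 0 < v^2 - 34*v + 1) :
    ((1+u)*(u^2-34*u+1))^2*(v^2+14*v+1)^3 < ((1+v)*(v^2-34*v+1))^2*(u^2+14*u+1)^3 := by
  have hx : (0:ℝ) ≤ u - 33 := by
    by_contra hcon
    push_neg at hcon
    nlinarith [mul_nonneg (by linarith : (0:ℝ) ≤ u - 1) (by linarith : (0:ℝ) ≤ 33 - u)]
  have hy : (0:ℝ) ≤ v - 33 := by linarith
  have hvu : (0:ℝ) ≤ v - u := by linarith
  have ha : (0:ℝ) ≤ u^2-34*u+1 := le_of_lt hQu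
  have hb : (0:ℝ) ≤ v^2-34*v+1 := le_of_lt hQv
  have hstrict : (0:ℝ) < (v-u) * (u^2-34*u+1) := mul_pos (by linarith) hQu
  linarith [hstrict, (mul_nonneg hvu ha),
    (mul_nonneg (mul_nonneg hvu ha) (pow_nonneg hy 1)),
    (mul_nonneg (mul_nonneg hvu ha) (pow_nonneg hy 2)),
    (mul_nonneg (mul_nonneg hvu ha) (pow_nonneg hy 3)),
    (mul_nonneg (mul_nonneg hvu ha) (pow_nonneg hy 4)),
    (mul_nonneg (mul_nonneg hvu ha) (pow_nonneg hy 5)),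
    (mul_nonneg (mul_nonneg hvu ha) (pow_nonneg hx 1)),
    (mul_nonneg (mul_nonneg (mul_nonneg hvu ha) (pow_nonneg hx 1)) (pow_nonneg hy 1)),
    (mul_nonneg (mul_nonneg (mul_nonneg hvu ha) (pow_nonneg hx 1)) (pow_nonneg hy 2)),
    (mul_nonneg (mul_nonneg (mul_nonneg hvu ha) (pow_nonneg hx 1)) (pow_nonneg hy 3)),
    (mul_nonneg (mul_nonneg (mul_nonneg hvu ha) (pow_nonneg hx 1)) (pow_nonneg hy 4)),
    (mul_nonneg (mul_nonneg (mul_nonneg hvu ha) (pow_nonneg hx 1)) (pow_nonneg hy 5)),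
    (mul_nonneg (mul_nonneg hvu ha) (pow_nonneg hx 2)),
    (mul_nonneg (mul_nonneg (mul_nonneg hvu ha) (pow_nonneg hx 2)) (pow_nonneg hy 1)),
    (mul_nonneg (mul_nonneg (mul_nonneg hvu ha) (pow_nonneg hx 2)) (pow_nonneg hy 2)),
    (mul_nonneg (mul_nonneg (mul_nonneg hvu ha) (pow_nonneg hx 2)) (pow_nonneg hy 3)),
    (mul_nonneg (mul_nonneg (mul_nonneg hvu ha) (pow_nonneg hx 2)) (pow_nonneg hy 4)),
    (mul_nonneg (mul_nonneg (mul_nonneg hvu ha) (pow_nonneg hx 2)) (pow_nonneg hy 5)),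
    (mul_nonneg (mul_nonneg hvu ha) (pow_nonneg hx 3)),
    (mul_nonneg (mul_nonneg (mul_nonneg hvu ha) (pow_nonneg hx 3)) (pow_nonneg hy 1)),
    (mul_nonneg (mul_nonneg (mul_nonneg hvu ha) (pow_nonneg hx 3)) (pow_nonneg hy 2)),
    (mul_nonneg (mul_nonneg (mul_nonneg hvu ha) (pow_nonneg hx 3)) (pow_nonneg hy 3)),
    (mul_nonneg (mul_nonneg (mul_nonneg hvu ha) (pow_nonneg hx 3)) (pow_nonneg hy 4)),
    (mul_nonneg (mul_nonneg (mul_nonneg hvu ha) (pow_nonneg hx 3)) (pow_nonneg hy 5)),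
    (mul_nonneg hvu hb),
    (mul_nonneg (mul_nonneg hvu hb) (pow_nonneg hy 1)),
    (mul_nonneg (mul_nonneg hvu hb) (pow_nonneg hy 2)),
    (mul_nonneg (mul_nonneg hvu hb) (pow_nonneg hy 3)),
    (mul_nonneg (mul_nonneg hvu hb) (pow_nonneg hx 1)),
    (mul_nonneg (mul_nonneg (mul_nonneg hvu hb) (pow_nonneg hx 1)) (pow_nonneg hy 1)),
    (mul_nonneg (mul_nonneg (mul_nonneg hvu hb) (pow_nonneg hx 1)) (pow_nonneg hy 2)),
    (mul_nonneg (mul_nonneg (mul_nonneg hvu hb) (pow_nonneg hx 1)) (pow_nonneg hy 3))]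

private lemma quadzero (u v : ℝ) (hu : 1 ≤ u) (hv : 1 ≤ v)
    (hQu : u^2 - 34*u + 1 = 0) (hQv : v^2 - 34*v + 1 = 0) : u = v := by
  have h34 : (u - v) * (u + v - 34) = 0 := by linear_combination hQu - hQv
  rcases mul_eq_zero.mp h34 with h | h
  · linarith
  · exfalso
    have h1 : (0:ℝ) ≤ u - 1 := by linarith
    have h2 : (0:ℝ) ≤ 33 - u := by linarith
    nlinarith [mul_nonneg h1 h2]

private lemma key (u v K : ℝ) (hu : 1 ≤ u) (hv : 1 ≤ v) (hK : 0 < K)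
    (E1 : u^2 + 14*u + 1 = K^2 * (v^2 + 14*v + 1))
    (E2 : (1+u)*(u^2-34*u+1) = K^3 * ((1+v)*(v^2-34*v+1))) : u = v := by
  have hK3 : 0 < K^3 := pow_pos hK 3
  have hD : ((1+u)*(u^2-34*u+1))^2*(v^2+14*v+1)^3
      = ((1+v)*(v^2-34*v+1))^2*(u^2+14*u+1)^3 := by
    linear_combination ((v^2+14*v+1)^3*((1+u)*(u^2-34*u+1) + K^3*((1+v)*(v^2-34*v+1)))) * E2
      - (((1+v)*(v^2-34*v+1))^2*((u^2+14*u+1)^2 + (u^2+14*u+1)*K^2*(v^2+14*v+1)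
        + K^4*(v^2+14*v+1)^2)) * E1
  rcases lt_trichotomy (u^2 - 34*u + 1) 0 with hQu | hQu | hQu
  · rcases lt_trichotomy (v^2 - 34*v + 1) 0 with hQv | hQv | hQv
    · rcases lt_trichotomy u v with h | h | h
      · exact absurd hD (reg1 u v hu h hQu hQv).ne'
      · exact h
      · exact absurd hD (reg1 v u hv h hQv hQu).ne
    · exfalso
      have h0 : (1+u)*(u^2-34*u+1) = 0 := by linear_combination E2 + K^3*(1+v)*hQv
      nlinarith [mul_neg_of_pos_of_neg (by linarith : (0:ℝ) < 1+u) hQu]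
    · exfalso
      have hneg : (1+u)*(u^2-34*u+1) < 0 :=
        mul_neg_of_pos_of_neg (by linarith) hQu
      have hpos : 0 < K^3 * ((1+v)*(v^2-34*v+1)) :=
        mul_pos hK3 (mul_pos (by linarith) hQv)
      linarith [E2.ge, E2.le]
  · -- Qu = 0
    have h0 : K^3 * ((1+v)*(v^2-34*v+1)) = 0 := by linear_combination (1+u)*hQu - E2
    rcases mul_eq_zero.mp h0 with h | h
    · exact absurd h (pow_ne_zero 3 hK.ne')
    · rcases mul_eq_zero.mp h with h' | h'
      · exfalso; linarith
      · exact quadzero u v hu hv hQu h'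
  · rcases lt_trichotomy (v^2 - 34*v + 1) 0 with hQv | hQv | hQv
    · exfalso
      have hpos : 0 < (1+u)*(u^2-34*u+1) := mul_pos (by linarith) hQu
      have hneg : K^3 * ((1+v)*(v^2-34*v+1)) < 0 :=
        mul_neg_of_pos_of_neg hK3 (mul_neg_of_pos_of_neg (by linarith) hQv)
      linarith [E2.ge, E2.le]
    · exfalso
      have h0 : (1+u)*(u^2-34*u+1) = 0 := by linear_combination E2 + K^3*(1+v)*hQv
      nlinarith [mul_pos (by linarith : (0:ℝ) < 1+u) hQu]
    · rcases lt_trichotomy u v with h | h | h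
      · exact absurd hD (reg2 u v hu h hQu hQv).ne
      · exact h
      · exact absurd hD (reg2 v u hv h hQv hQu).ne'

set_option maxHeartbeats 1600000 in
/-- for `t ≠ s` in `[1,∞)` the quartics `f_t` and `f_s` are not
projectively equivalent: there is no `c ≠ 0` and `g ∈ GL₂(ℝ)` with
`f_t = c · (g · f_s)`, where `(g·f)(v) = f(g⁻¹ v)`. -/
theorem stmt6 (t s : ℝ) (ht : t ∈ Set.Ici (1 : ℝ)) (hs : s ∈ Set.Ici (1 : ℝ))
    (hts : t ≠ s) :
    ¬ ∃ (c : ℝ) (g : Matrix (Fin 2) (Fin 2) ℝ), c ≠ 0 ∧ IsUnit g.det ∧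
      ∀ x y : ℝ, fq t x y =
        c * fq s (g⁻¹ 0 0 * x + g⁻¹ 0 1 * y) (g⁻¹ 1 0 * x + g⁻¹ 1 1 * y) := by
  rintro ⟨c, g, hc, hdet, h⟩
  have ht1 : (1:ℝ) ≤ t := ht
  have hs1 : (1:ℝ) ≤ s := hs
  set p := g⁻¹ 0 0 with hp
  set q := g⁻¹ 0 1 with hq
  set r := g⁻¹ 1 0 with hr
  set w := g⁻¹ 1 1 with hw
  have hgg : g * g⁻¹ = 1 := Matrix.mul_nonsing_inv g hdet
  have hdet1 : g.det * (g⁻¹).det = 1 := by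
    rw [← Matrix.det_mul, hgg, Matrix.det_one]
  have hdelta : p * w - q * r ≠ 0 := by
    have h2 : (g⁻¹).det = p * w - q * r := by
      rw [Matrix.det_fin_two, hp, hq, hr, hw]
    intro h0
    rw [h2, h0, mul_zero] at hdet1
    exact one_ne_zero hdet1.symm
  have h10 := h 1 0
  have h01 := h 0 1
  have h11 := h 1 1
  have hm := h 1 (-1)
  have h21 := h 2 1
  simp only [fq] at h10 h01 h11 hm h21
  have hA : t^2 = c * ((p^2+r^2)*(s^2*p^2+r^2)) := by linear_combination h10
  have hI : t^4 + 14*t^2 + 1 = (c*(p*w-q*r)^2)^2 * (s^4 + 14*s^2 + 1) := by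
    linear_combination (11 - 1*t^2 - 6*r^2*w^2*c - 24*r^3*w*c - 1*q^2*r^2*c - 1*q^2*r^2*c*s^2 - 4*p*q*r*w*c - 4*p*q*r*w*c*s^2 - 12*p*q*r^2*c - 12*p*q*r^2*c*s^2 - 1*p^2*w^2*c - 1*p^2*w^2*c*s^2 - 12*p^2*r*w*c - 12*p^2*r*w*c*s^2 - 6*p^2*q^2*c*s^2 - 24*p^3*q*c*s^2) * h10 + (-1 - 1*t^2 - 6*r^2*w^2*c + 6*r^3*w*c + 12*r^4*c - 1*q^2*r^2*c - 1*q^2*r^2*c*s^2 - 4*p*q*r*w*c - 4*p*q*r*w*c*s^2 + 3*p*q*r^2*c + 3*p*q*r^2*c*s^2 - 1*p^2*w^2*c - 1*p^2*w^2*c*s^2 + 3*p^2*r*w*c + 3*p^2*r*w*c*s^2 + 12*p^2*r^2*c + 12*p^2*r^2*c*s^2 - 6*p^2*q^2*c*s^2 + 6*p^3*q*c*s^2 + 12*p^4*c*s^2) * h01 + ((1/2) + (1/2)*t^2 + 3*r^2*w^2*c - 12*r^3*w*c + (1/2)*q^2*r^2*c + (1/2)*q^2*r^2*c*s^2 + 2*p*q*r*w*c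 + 2*p*q*r*w*c*s^2 - 6*p*q*r^2*c - 6*p*q*r^2*c*s^2 + (1/2)*p^2*w^2*c + (1/2)*p^2*w^2*c*s^2 - 6*p^2*r*w*c - 6*p^2*r*w*c*s^2 + 3*p^2*q^2*c*s^2 - 12*p^3*q*c*s^2) * h11 + ((1/2) + (1/2)*t^2 + 3*r^2*w^2*c + 4*r^3*w*c + (1/2)*q^2*r^2*c + (1/2)*q^2*r^2*c*s^2 + 2*p*q*r*w*c + 2*p*q*r*w*c*s^2 + 2*p*q*r^2*c + 2*p*q*r^2*c*s^2 + (1/2)*p^2*w^2*c + (1/2)*p^2*w^2*c*s^2 + 2*p^2*r*w*c + 2*p^2*r*w*c*s^2 + 3*p^2*q^2*c*s^2 + 4*p^3*q*c*s^2) * hm + (2*r^3*w*c + 1*p*q*r^2*c + 1*p*q*r^2*c*s^2 + 1*p^2*r*w*c + 1*p^2*r*w*c*s^2 + 2*p^3*q*c*s^2) * h21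
  have hJ : 72*t^2*(1+t^2) - 2*(1+t^2)^3
      = (c*(p*w-q*r)^2)^3 * (72*s^2*(1+s^2) - 2*(1+s^2)^3) := by
    linear_combination (74 + 76*t^2 + 2*t^4 + 12*r^2*w^2*c + 12*r^2*w^2*c*t^2 + 216*r^3*w^5*c^2 - 72*r^4*c + 72*r^4*w^4*c^2 + 216*r^5*w^3*c^2 + 2*q^2*r^2*c + 2*q^2*r^2*c*t^2 + 2*q^2*r^2*c*s^2 + 2*q^2*r^2*c*s^2*t^2 + 216*q^2*r^3*w^3*c^2 + 216*q^2*r^3*w^3*c^2*s^2 + 24*q^2*r^4*w^2*c^2 + 24*q^2*r^4*w^2*c^2*s^2 - 36*q^2*r^5*w*c^2 - 36*q^2*r^5*w*c^2*s^2 + 216*q^4*r^3*w*c^2*s^2 + 2*q^4*r^4*c^2 + 4*q^4*r^4*c^2*s^2 + 2*q^4*r^4*c^2*s^4 + 8*p*q*r*w*c + 8*p*q*r*w*c*t^2 + 8*p*q*r*w*c*s^2 + 8*p*q*r*w*c*s^2*t^2 + 108*p*q*r^2*w^4*c^2 + 108*p*q*r^2*w^4*c^2*s^2 + 96*p*q*r^3*w^3*c^2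 + 96*p*q*r^3*w^3*c^2*s^2 + 396*p*q*r^4*w^2*c^2 + 396*p*q*r^4*w^2*c^2*s^2 + 108*p*q^3*r^2*w^2*c^2 + 216*p*q^3*r^2*w^2*c^2*s^2 + 108*p*q^3*r^2*w^2*c^2*s^4 + 16*p*q^3*r^3*w*c^2 + 32*p*q^3*r^3*w*c^2*s^2 + 16*p*q^3*r^3*w*c^2*s^4 + 36*p*q^3*r^4*c^2 - 144*p*q^3*r^4*c^2*s^2 + 36*p*q^3*r^4*c^2*s^4 + 108*p*q^5*r^2*c^2*s^2 + 108*p*q^5*r^2*c^2*s^4 + 2*p^2*w^2*c + 2*p^2*w^2*c*t^2 + 2*p^2*w^2*c*s^2 + 2*p^2*w^2*c*s^2*t^2 + 108*p^2*r*w^5*c^2 + 108*p^2*r*w^5*c^2*s^2 - 72*p^2*r^2*c - 72*p^2*r^2*c*s^2 + 24*p^2*r^2*w^4*c^2 + 24*p^2*r^2*w^4*c^2*s^2 + 72*p^2*r^3*w^3*c^2 + 72*p^2*r^3*w^3*c^2*s^2 + 12*p^2*q^2*c*s^2 + 12*p^2*q^2*c*s^2*t^2 + 108*p^2*q^2*r*w^3*c^2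 + 216*p^2*q^2*r*w^3*c^2*s^2 + 108*p^2*q^2*r*w^3*c^2*s^4 + 36*p^2*q^2*r^2*w^2*c^2 + 216*p^2*q^2*r^2*w^2*c^2*s^2 + 36*p^2*q^2*r^2*w^2*c^2*s^4 + 72*p^2*q^2*r^3*w*c^2 + 576*p^2*q^2*r^3*w*c^2*s^2 + 72*p^2*q^2*r^3*w*c^2*s^4 + 108*p^2*q^4*r*w*c^2*s^2 + 108*p^2*q^4*r*w*c^2*s^4 + 24*p^2*q^4*r^2*c^2*s^2 + 24*p^2*q^4*r^2*c^2*s^4 + 216*p^3*q*w^4*c^2*s^2 + 16*p^3*q*r*w^3*c^2 + 32*p^3*q*r*w^3*c^2*s^2 + 16*p^3*q*r*w^3*c^2*s^4 + 72*p^3*q*r^2*w^2*c^2 + 576*p^3*q*r^2*w^2*c^2*s^2 + 72*p^3*q*r^2*w^2*c^2*s^4 + 216*p^3*q^3*w^2*c^2*s^2 + 216*p^3*q^3*w^2*c^2*s^4 + 96*p^3*q^3*r*w*c^2*s^2 + 96*p^3*q^3*r*w*c^2*s^4 + 72*p^3*q^3*r^2*c^2*s^2 + 72*p^3*q^3*r^2*c^2*s^4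 + 216*p^3*q^5*c^2*s^4 - 72*p^4*c*s^2 + 2*p^4*w^4*c^2 + 4*p^4*w^4*c^2*s^2 + 2*p^4*w^4*c^2*s^4 + 36*p^4*r*w^3*c^2 - 144*p^4*r*w^3*c^2*s^2 + 36*p^4*r*w^3*c^2*s^4 + 24*p^4*q^2*w^2*c^2*s^2 + 24*p^4*q^2*w^2*c^2*s^4 + 396*p^4*q^2*r*w*c^2*s^2 + 396*p^4*q^2*r*w*c^2*s^4 + 72*p^4*q^4*c^2*s^4 - 36*p^5*q*w^2*c^2*s^2 - 36*p^5*q*w^2*c^2*s^4 + 216*p^5*q^3*c^2*s^4) * h10 + (2 + 4*t^2 + 2*t^4 + 12*r^2*w^2*c + 12*r^2*w^2*c*t^2 - 54*r^3*w^5*c^2 - 72*r^4*c + 72*r^4*w^4*c^2 - 54*r^5*w^3*c^2 + 432*r^6*w^2*c^2 + 2*q^2*r^2*c + 2*q^2*r^2*c*t^2 + 2*q^2*r^2*c*s^2 + 2*q^2*r^2*c*s^2*t^2 - 54*q^2*r^3*w^3*c^2 - 54*q^2*r^3*w^3*c^2*s^2 + 24*q^2*r^4*w^2*c^2 + 24*q^2*r^4*w^2*c^2*s^2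 + 9*q^2*r^5*w*c^2 + 9*q^2*r^5*w*c^2*s^2 + 72*q^2*r^6*c^2 + 72*q^2*r^6*c^2*s^2 - 54*q^4*r^3*w*c^2*s^2 + 2*q^4*r^4*c^2 + 4*q^4*r^4*c^2*s^2 + 2*q^4*r^4*c^2*s^4 + 8*p*q*r*w*c + 8*p*q*r*w*c*t^2 + 8*p*q*r*w*c*s^2 + 8*p*q*r*w*c*s^2*t^2 - 27*p*q*r^2*w^4*c^2 - 27*p*q*r^2*w^4*c^2*s^2 + 96*p*q*r^3*w^3*c^2 + 96*p*q*r^3*w^3*c^2*s^2 - 99*p*q*r^4*w^2*c^2 - 99*p*q*r^4*w^2*c^2*s^2 + 288*p*q*r^5*w*c^2 + 288*p*q*r^5*w*c^2*s^2 - 27*p*q^3*r^2*w^2*c^2 - 54*p*q^3*r^2*w^2*c^2*s^2 - 27*p*q^3*r^2*w^2*c^2*s^4 + 16*p*q^3*r^3*w*c^2 + 32*p*q^3*r^3*w*c^2*s^2 + 16*p*q^3*r^3*w*c^2*s^4 - 9*p*q^3*r^4*c^2 + 36*p*q^3*r^4*c^2*s^2 - 9*p*q^3*r^4*c^2*s^4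 - 27*p*q^5*r^2*c^2*s^2 - 27*p*q^5*r^2*c^2*s^4 + 2*p^2*w^2*c + 2*p^2*w^2*c*t^2 + 2*p^2*w^2*c*s^2 + 2*p^2*w^2*c*s^2*t^2 - 27*p^2*r*w^5*c^2 - 27*p^2*r*w^5*c^2*s^2 - 72*p^2*r^2*c - 72*p^2*r^2*c*s^2 + 24*p^2*r^2*w^4*c^2 + 24*p^2*r^2*w^4*c^2*s^2 - 18*p^2*r^3*w^3*c^2 - 18*p^2*r^3*w^3*c^2*s^2 + 504*p^2*r^4*w^2*c^2 + 504*p^2*r^4*w^2*c^2*s^2 + 12*p^2*q^2*c*s^2 + 12*p^2*q^2*c*s^2*t^2 - 27*p^2*q^2*r*w^3*c^2 - 54*p^2*q^2*r*w^3*c^2*s^2 - 27*p^2*q^2*r*w^3*c^2*s^4 + 36*p^2*q^2*r^2*w^2*c^2 + 216*p^2*q^2*r^2*w^2*c^2*s^2 + 36*p^2*q^2*r^2*w^2*c^2*s^4 - 18*p^2*q^2*r^3*w*c^2 - 144*p^2*q^2*r^3*w*c^2*s^2 - 18*p^2*q^2*r^3*w*c^2*s^4 + 72*p^2*q^2*r^4*c^2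 + 576*p^2*q^2*r^4*c^2*s^2 + 72*p^2*q^2*r^4*c^2*s^4 - 27*p^2*q^4*r*w*c^2*s^2 - 27*p^2*q^4*r*w*c^2*s^4 + 24*p^2*q^4*r^2*c^2*s^2 + 24*p^2*q^4*r^2*c^2*s^4 - 54*p^3*q*w^4*c^2*s^2 + 16*p^3*q*r*w^3*c^2 + 32*p^3*q*r*w^3*c^2*s^2 + 16*p^3*q*r*w^3*c^2*s^4 - 18*p^3*q*r^2*w^2*c^2 - 144*p^3*q*r^2*w^2*c^2*s^2 - 18*p^3*q*r^2*w^2*c^2*s^4 + 288*p^3*q*r^3*w*c^2 + 576*p^3*q*r^3*w*c^2*s^2 + 288*p^3*q*r^3*w*c^2*s^4 - 54*p^3*q^3*w^2*c^2*s^2 - 54*p^3*q^3*w^2*c^2*s^4 + 96*p^3*q^3*r*w*c^2*s^2 + 96*p^3*q^3*r*w*c^2*s^4 - 18*p^3*q^3*r^2*c^2*s^2 - 18*p^3*q^3*r^2*c^2*s^4 - 54*p^3*q^5*c^2*s^4 - 72*p^4*c*s^2 + 2*p^4*w^4*c^2 + 4*p^4*w^4*c^2*s^2 + 2*p^4*w^4*c^2*s^4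 - 9*p^4*r*w^3*c^2 + 36*p^4*r*w^3*c^2*s^2 - 9*p^4*r*w^3*c^2*s^4 + 72*p^4*r^2*w^2*c^2 + 576*p^4*r^2*w^2*c^2*s^2 + 72*p^4*r^2*w^2*c^2*s^4 + 24*p^4*q^2*w^2*c^2*s^2 + 24*p^4*q^2*w^2*c^2*s^4 - 99*p^4*q^2*r*w*c^2*s^2 - 99*p^4*q^2*r*w*c^2*s^4 + 504*p^4*q^2*r^2*c^2*s^2 + 504*p^4*q^2*r^2*c^2*s^4 + 72*p^4*q^4*c^2*s^4 + 9*p^5*q*w^2*c^2*s^2 + 9*p^5*q*w^2*c^2*s^4 + 288*p^5*q*r*w*c^2*s^2 + 288*p^5*q*r*w*c^2*s^4 - 54*p^5*q^3*c^2*s^4 + 72*p^6*w^2*c^2*s^2 + 72*p^6*w^2*c^2*s^4 + 432*p^6*q^2*c^2*s^4) * h01 + (-1 - 2*t^2 - 1*t^4 - 6*r^2*w^2*c - 6*r^2*w^2*c*t^2 + 54*r^3*w^5*c^2 + 36*r^4*c - 36*r^4*w^4*c^2 + 108*r^5*w^3*c^2 - 1*q^2*r^2*c - 1*q^2*r^2*c*t^2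 - 1*q^2*r^2*c*s^2 - 1*q^2*r^2*c*s^2*t^2 + 54*q^2*r^3*w^3*c^2 + 54*q^2*r^3*w^3*c^2*s^2 - 12*q^2*r^4*w^2*c^2 - 12*q^2*r^4*w^2*c^2*s^2 - 18*q^2*r^5*w*c^2 - 18*q^2*r^5*w*c^2*s^2 + 54*q^4*r^3*w*c^2*s^2 - 1*q^4*r^4*c^2 - 2*q^4*r^4*c^2*s^2 - 1*q^4*r^4*c^2*s^4 - 4*p*q*r*w*c - 4*p*q*r*w*c*t^2 - 4*p*q*r*w*c*s^2 - 4*p*q*r*w*c*s^2*t^2 + 27*p*q*r^2*w^4*c^2 + 27*p*q*r^2*w^4*c^2*s^2 - 48*p*q*r^3*w^3*c^2 - 48*p*q*r^3*w^3*c^2*s^2 + 198*p*q*r^4*w^2*c^2 + 198*p*q*r^4*w^2*c^2*s^2 + 27*p*q^3*r^2*w^2*c^2 + 54*p*q^3*r^2*w^2*c^2*s^2 + 27*p*q^3*r^2*w^2*c^2*s^4 - 8*p*q^3*r^3*w*c^2 - 16*p*q^3*r^3*w*c^2*s^2 - 8*p*q^3*r^3*w*c^2*s^4 + 18*p*q^3*r^4*c^2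 - 72*p*q^3*r^4*c^2*s^2 + 18*p*q^3*r^4*c^2*s^4 + 27*p*q^5*r^2*c^2*s^2 + 27*p*q^5*r^2*c^2*s^4 - 1*p^2*w^2*c - 1*p^2*w^2*c*t^2 - 1*p^2*w^2*c*s^2 - 1*p^2*w^2*c*s^2*t^2 + 27*p^2*r*w^5*c^2 + 27*p^2*r*w^5*c^2*s^2 + 36*p^2*r^2*c + 36*p^2*r^2*c*s^2 - 12*p^2*r^2*w^4*c^2 - 12*p^2*r^2*w^4*c^2*s^2 + 36*p^2*r^3*w^3*c^2 + 36*p^2*r^3*w^3*c^2*s^2 - 6*p^2*q^2*c*s^2 - 6*p^2*q^2*c*s^2*t^2 + 27*p^2*q^2*r*w^3*c^2 + 54*p^2*q^2*r*w^3*c^2*s^2 + 27*p^2*q^2*r*w^3*c^2*s^4 - 18*p^2*q^2*r^2*w^2*c^2 - 108*p^2*q^2*r^2*w^2*c^2*s^2 - 18*p^2*q^2*r^2*w^2*c^2*s^4 + 36*p^2*q^2*r^3*w*c^2 + 288*p^2*q^2*r^3*w*c^2*s^2 + 36*p^2*q^2*r^3*w*c^2*s^4 + 27*p^2*q^4*r*w*c^2*s^2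 + 27*p^2*q^4*r*w*c^2*s^4 - 12*p^2*q^4*r^2*c^2*s^2 - 12*p^2*q^4*r^2*c^2*s^4 + 54*p^3*q*w^4*c^2*s^2 - 8*p^3*q*r*w^3*c^2 - 16*p^3*q*r*w^3*c^2*s^2 - 8*p^3*q*r*w^3*c^2*s^4 + 36*p^3*q*r^2*w^2*c^2 + 288*p^3*q*r^2*w^2*c^2*s^2 + 36*p^3*q*r^2*w^2*c^2*s^4 + 54*p^3*q^3*w^2*c^2*s^2 + 54*p^3*q^3*w^2*c^2*s^4 - 48*p^3*q^3*r*w*c^2*s^2 - 48*p^3*q^3*r*w*c^2*s^4 + 36*p^3*q^3*r^2*c^2*s^2 + 36*p^3*q^3*r^2*c^2*s^4 + 54*p^3*q^5*c^2*s^4 + 36*p^4*c*s^2 - 1*p^4*w^4*c^2 - 2*p^4*w^4*c^2*s^2 - 1*p^4*w^4*c^2*s^4 + 18*p^4*r*w^3*c^2 - 72*p^4*r*w^3*c^2*s^2 + 18*p^4*r*w^3*c^2*s^4 - 12*p^4*q^2*w^2*c^2*s^2 - 12*p^4*q^2*w^2*c^2*s^4 + 198*p^4*q^2*r*w*c^2*s^2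 + 198*p^4*q^2*r*w*c^2*s^4 - 36*p^4*q^4*c^2*s^4 - 18*p^5*q*w^2*c^2*s^2 - 18*p^5*q*w^2*c^2*s^4 + 108*p^5*q^3*c^2*s^4) * h11 + (-1 - 2*t^2 - 1*t^4 - 6*r^2*w^2*c - 6*r^2*w^2*c*t^2 + 18*r^3*w^5*c^2 + 36*r^4*c - 36*r^4*w^4*c^2 - 36*r^5*w^3*c^2 - 1*q^2*r^2*c - 1*q^2*r^2*c*t^2 - 1*q^2*r^2*c*s^2 - 1*q^2*r^2*c*s^2*t^2 + 18*q^2*r^3*w^3*c^2 + 18*q^2*r^3*w^3*c^2*s^2 - 12*q^2*r^4*w^2*c^2 - 12*q^2*r^4*w^2*c^2*s^2 + 6*q^2*r^5*w*c^2 + 6*q^2*r^5*w*c^2*s^2 + 18*q^4*r^3*w*c^2*s^2 - 1*q^4*r^4*c^2 - 2*q^4*r^4*c^2*s^2 - 1*q^4*r^4*c^2*s^4 - 4*p*q*r*w*c - 4*p*q*r*w*c*t^2 - 4*p*q*r*w*c*s^2 - 4*p*q*r*w*c*s^2*t^2 + 9*p*q*r^2*w^4*c^2 + 9*p*q*r^2*w^4*c^2*s^2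 - 48*p*q*r^3*w^3*c^2 - 48*p*q*r^3*w^3*c^2*s^2 - 66*p*q*r^4*w^2*c^2 - 66*p*q*r^4*w^2*c^2*s^2 + 9*p*q^3*r^2*w^2*c^2 + 18*p*q^3*r^2*w^2*c^2*s^2 + 9*p*q^3*r^2*w^2*c^2*s^4 - 8*p*q^3*r^3*w*c^2 - 16*p*q^3*r^3*w*c^2*s^2 - 8*p*q^3*r^3*w*c^2*s^4 - 6*p*q^3*r^4*c^2 + 24*p*q^3*r^4*c^2*s^2 - 6*p*q^3*r^4*c^2*s^4 + 9*p*q^5*r^2*c^2*s^2 + 9*p*q^5*r^2*c^2*s^4 - 1*p^2*w^2*c - 1*p^2*w^2*c*t^2 - 1*p^2*w^2*c*s^2 - 1*p^2*w^2*c*s^2*t^2 + 9*p^2*r*w^5*c^2 + 9*p^2*r*w^5*c^2*s^2 + 36*p^2*r^2*c + 36*p^2*r^2*c*s^2 - 12*p^2*r^2*w^4*c^2 - 12*p^2*r^2*w^4*c^2*s^2 - 12*p^2*r^3*w^3*c^2 - 12*p^2*r^3*w^3*c^2*s^2 - 6*p^2*q^2*c*s^2 - 6*p^2*q^2*c*s^2*t^2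 + 9*p^2*q^2*r*w^3*c^2 + 18*p^2*q^2*r*w^3*c^2*s^2 + 9*p^2*q^2*r*w^3*c^2*s^4 - 18*p^2*q^2*r^2*w^2*c^2 - 108*p^2*q^2*r^2*w^2*c^2*s^2 - 18*p^2*q^2*r^2*w^2*c^2*s^4 - 12*p^2*q^2*r^3*w*c^2 - 96*p^2*q^2*r^3*w*c^2*s^2 - 12*p^2*q^2*r^3*w*c^2*s^4 + 9*p^2*q^4*r*w*c^2*s^2 + 9*p^2*q^4*r*w*c^2*s^4 - 12*p^2*q^4*r^2*c^2*s^2 - 12*p^2*q^4*r^2*c^2*s^4 + 18*p^3*q*w^4*c^2*s^2 - 8*p^3*q*r*w^3*c^2 - 16*p^3*q*r*w^3*c^2*s^2 - 8*p^3*q*r*w^3*c^2*s^4 - 12*p^3*q*r^2*w^2*c^2 - 96*p^3*q*r^2*w^2*c^2*s^2 - 12*p^3*q*r^2*w^2*c^2*s^4 + 18*p^3*q^3*w^2*c^2*s^2 + 18*p^3*q^3*w^2*c^2*s^4 - 48*p^3*q^3*r*w*c^2*s^2 - 48*p^3*q^3*r*w*c^2*s^4 - 12*p^3*q^3*r^2*c^2*s^2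 - 12*p^3*q^3*r^2*c^2*s^4 + 18*p^3*q^5*c^2*s^4 + 36*p^4*c*s^2 - 1*p^4*w^4*c^2 - 2*p^4*w^4*c^2*s^2 - 1*p^4*w^4*c^2*s^4 - 6*p^4*r*w^3*c^2 + 24*p^4*r*w^3*c^2*s^2 - 6*p^4*r*w^3*c^2*s^4 - 12*p^4*q^2*w^2*c^2*s^2 - 12*p^4*q^2*w^2*c^2*s^4 - 66*p^4*q^2*r*w*c^2*s^2 - 66*p^4*q^2*r*w*c^2*s^4 - 36*p^4*q^4*c^2*s^4 + 6*p^5*q*w^2*c^2*s^2 + 6*p^5*q*w^2*c^2*s^4 - 36*p^5*q^3*c^2*s^4) * hm + (-18*r^3*w^5*c^2 - 18*r^5*w^3*c^2 - 18*q^2*r^3*w^3*c^2 - 18*q^2*r^3*w^3*c^2*s^2 + 3*q^2*r^5*w*c^2 + 3*q^2*r^5*w*c^2*s^2 - 18*q^4*r^3*w*c^2*s^2 - 9*p*q*r^2*w^4*c^2 - 9*p*q*r^2*w^4*c^2*s^2 - 33*p*q*r^4*w^2*c^2 - 33*p*q*r^4*w^2*c^2*s^2 - 9*p*q^3*r^2*w^2*c^2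 - 18*p*q^3*r^2*w^2*c^2*s^2 - 9*p*q^3*r^2*w^2*c^2*s^4 - 3*p*q^3*r^4*c^2 + 12*p*q^3*r^4*c^2*s^2 - 3*p*q^3*r^4*c^2*s^4 - 9*p*q^5*r^2*c^2*s^2 - 9*p*q^5*r^2*c^2*s^4 - 9*p^2*r*w^5*c^2 - 9*p^2*r*w^5*c^2*s^2 - 6*p^2*r^3*w^3*c^2 - 6*p^2*r^3*w^3*c^2*s^2 - 9*p^2*q^2*r*w^3*c^2 - 18*p^2*q^2*r*w^3*c^2*s^2 - 9*p^2*q^2*r*w^3*c^2*s^4 - 6*p^2*q^2*r^3*w*c^2 - 48*p^2*q^2*r^3*w*c^2*s^2 - 6*p^2*q^2*r^3*w*c^2*s^4 - 9*p^2*q^4*r*w*c^2*s^2 - 9*p^2*q^4*r*w*c^2*s^4 - 18*p^3*q*w^4*c^2*s^2 - 6*p^3*q*r^2*w^2*c^2 - 48*p^3*q*r^2*w^2*c^2*s^2 - 6*p^3*q*r^2*w^2*c^2*s^4 - 18*p^3*q^3*w^2*c^2*s^2 - 18*p^3*q^3*w^2*c^2*s^4 - 6*p^3*q^3*r^2*c^2*s^2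 - 6*p^3*q^3*r^2*c^2*s^4 - 18*p^3*q^5*c^2*s^4 - 3*p^4*r*w^3*c^2 + 12*p^4*r*w^3*c^2*s^2 - 3*p^4*r*w^3*c^2*s^4 - 33*p^4*q^2*r*w*c^2*s^2 - 33*p^4*q^2*r*w*c^2*s^4 + 3*p^5*q*w^2*c^2*s^2 + 3*p^5*q*w^2*c^2*s^4 - 18*p^5*q^3*c^2*s^4) * h21
  clear h10 h01 h11 hm h21 h hgg hdet1 hdet
  have hpr : p ≠ 0 ∨ r ≠ 0 := by
    by_contra hcon
    push_neg at hcon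
    exact hdelta (by rw [hcon.1, hcon.2]; ring)
  have hp2 : 0 < p^2 + r^2 := by
    rcases hpr with h' | h'
    · nlinarith [pow_two_pos_of_ne_zero h', sq_nonneg r]
    · nlinarith [pow_two_pos_of_ne_zero h', sq_nonneg p]
  have hsp : 0 < s^2*p^2 + r^2 := by
    rcases hpr with h' | h'
    · nlinarith [pow_two_pos_of_ne_zero h', sq_nonneg r,
        mul_nonneg (by nlinarith : (0:ℝ) ≤ s^2 - 1) (sq_nonneg p)]
    · nlinarith [pow_two_pos_of_ne_zero h', sq_nonneg (s*p)]
  have hfqpos : 0 < (p^2+r^2)*(s^2*p^2+r^2) := mul_pos hp2 hsp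
  have hcpos : 0 < c := by
    by_contra hcon
    push_neg at hcon
    have ht2 : (1:ℝ) ≤ t^2 := by nlinarith
    nlinarith [mul_nonneg (neg_nonneg.2 hcon) hfqpos.le]
  have hK : 0 < c * (p*w - q*r)^2 :=
    mul_pos hcpos (pow_two_pos_of_ne_zero hdelta)
  have hu : (1:ℝ) ≤ t^2 := by nlinarith
  have hv : (1:ℝ) ≤ s^2 := by nlinarith
  have E1 : (t^2)^2 + 14*t^2 + 1 = (c*(p*w-q*r)^2)^2 * ((s^2)^2 + 14*s^2 + 1) := by
    linear_combination hI
  have E2 : (1+t^2)*((t^2)^2-34*t^2+1)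
      = (c*(p*w-q*r)^2)^3 * ((1+s^2)*((s^2)^2-34*s^2+1)) := by
    linear_combination (-1/2 : ℝ) * hJ
  have hts2 : t^2 = s^2 := key (t^2) (s^2) (c*(p*w-q*r)^2) hu hv hK E1 E2
  have h0 : (t-s)*(t+s) = 0 := by linear_combination hts2
  rcases mul_eq_zero.mp h0 with h' | h'
  · exact hts (by linarith)
  · linarith
end

section
/- Let k,r,s,t ∈ ℝ and define μ ∈ Λ²(ℝ⁴)* ⊗ ℝ⁴ by A=(s,t,0,0), B=(0,0,r,0), C=(0,0,0,k), D=(0,0,0,−k), E=(0,0,r,0), F=(s,−t,0,0), where μ(X₁,X₂)=A, μ(X₁,X₃)=B, μ(X₁,X₄)=C, μ(X₂,X₃)=D, μ(X₂,X₄)=E, μ(X₃,X₄)=F in coordinates Z₁,…,Z₄. Then the Pfaffian form of the 2-step nilpotent algebra (ℝ⁴⊕ℝ⁴, μ) is f(x,y,z,w) = s²x² − t²y² − r²z² − k²w², where f(Z) = Pf(J_μ(Z)|_{v₁}) and ⟨J_μ(Z)X,Y⟩ = ⟨μ(X,Y),Z⟩. -/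
/-- The explicit Pfaffian of a `4×4` skew-symmetric matrix, normalized so that
the standard symplectic matrix has Pfaffian `1`. -/
def pf4 (A : Matrix (Fin 4) (Fin 4) ℝ) : ℝ :=
  A 0 1 * A 2 3 - A 0 2 * A 1 3 + A 0 3 * A 1 2

/-- The 2-step bracket `μ : v₁ × v₁ → v₂` (`v₁ = v₂ = ℝ⁴`) determined by
`A=(s,t,0,0)`, `B=(0,0,r,0)`, `C=(0,0,0,k)`, `D=(0,0,0,−k)`, `E=(0,0,r,0)`,
`F=(s,−t,0,0)` via `μ(X₁,X₂)=A`, `μ(X₁,X₃)=B`, `μ(X₁,X₄)=C`, `μ(X₂,X₃)=D`,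
`μ(X₂,X₄)=E`, `μ(X₃,X₄)=F` in coordinates `Z₁,…,Z₄`. -/
def mu18 (k r s t : ℝ) (X Y : Fin 4 → ℝ) : Fin 4 → ℝ := fun l =>
  (![s, t, 0, 0] l) * (X 0 * Y 1 - X 1 * Y 0)
    + (![0, 0, r, 0] l) * (X 0 * Y 2 - X 2 * Y 0)
    + (![0, 0, 0, k] l) * (X 0 * Y 3 - X 3 * Y 0)
    + (![0, 0, 0, -k] l) * (X 1 * Y 2 - X 2 * Y 1)
    + (![0, 0, r, 0] l) * (X 1 * Y 3 - X 3 * Y 1)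
    + (![s, -t, 0, 0] l) * (X 2 * Y 3 - X 3 * Y 2)

/-- Standard basis vector of `ℝ⁴`. -/
def e4 (i : Fin 4) : Fin 4 → ℝ := fun j => if j = i then 1 else 0

/-- The matrix of `J_μ(Z)|_{v₁}`, defined by `⟨J_μ(Z)X, Y⟩ = ⟨μ(X,Y), Z⟩`. -/
def JZmat (k r s t : ℝ) (Z : Fin 4 → ℝ) : Matrix (Fin 4) (Fin 4) ℝ :=
  Matrix.of fun i j => ∑ l : Fin 4, mu18 k r s t (e4 j) (e4 i) l * Z l

set_option maxHeartbeats 4000000 in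
/-- the Pfaffian form of the 2-step nilpotent algebra
`(ℝ⁴ ⊕ ℝ⁴, μ)` is `f(x,y,z,w) = s²x² − t²y² − r²z² − k²w²`. -/
theorem stmt18 (k r s t : ℝ) (x y z w : ℝ) :
    pf4 (JZmat k r s t ![x, y, z, w]) =
      s ^ 2 * x ^ 2 - t ^ 2 * y ^ 2 - r ^ 2 * z ^ 2 - k ^ 2 * w ^ 2 := by
  simp only [pf4, JZmat, mu18, e4, Matrix.of_apply, Fin.sum_univ_four,
    Matrix.cons_val_zero, Matrix.cons_val_one, Matrix.head_cons,
    Matrix.cons_val_two, Matrix.cons_val_three, Matrix.tail_cons, Fin.isValue]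
  norm_num [Fin.ext_iff, Fin.val_zero, Fin.val_one, Fin.val_two,
    show ((3:Fin 4):ℕ) = 3 from rfl]
  ring
end
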